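/- arXiv:1402.7243 — 2 statements merged into one kernel-verified Lean document; each statement's English description precedes it below -/
import Mathlib

section
/- Let φ : ℝ → ℝ be twice continuously differentiable and let s ∈ ℝ. Suppose the travelling wave ψ(x,t) = φ(x − st) solves the nonlinear variational wave equation, i.e. s²·φ″(ξ) = c(φ(ξ))·( c(φ(ξ))·φ′(ξ) )′ for all ξ ∈ ℝ. Then the first integral ξ ↦ ( φ′(ξ) )²·( s² − c(φ(ξ))² ) is constant on ℝ. In particular, if s² ≥ c(φ(ξ))² everywhere (or s² ≤ c(φ(ξ))² everywhere), then φ′(ξ)·√| s² − c(φ(ξ))² | has constant absolute value. -/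
/-- The wave speed `c(u) = √(α cos²u + β sin²u)`. -/
noncomputable def waveC (α β u : ℝ) : ℝ :=
  Real.sqrt (α * Real.cos u ^ 2 + β * Real.sin u ^ 2)

/-!
Expanding `(c(φ)φ′)′ = c′(φ)φ′² + c(φ)φ″`, the equation reads `(s² − c(φ)²)φ″ = c(φ)c′(φ)φ′²`.
Hence `((φ′)²(s² − c(φ)²))′ = 2φ′((s² − c(φ)²)φ″ − c(φ)c′(φ)φ′²) = 0`, for any differentiable
speed `c`.
-/

open Real

lemma waveC_radicand_pos {α β : ℝ} (hα : 0 < α) (hβ : 0 < β) (u : ℝ) :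
    0 < α * cos u ^ 2 + β * sin u ^ 2 := by
  rcases le_total α β with h | h <;>
    nlinarith [sin_sq_add_cos_sq u, sq_nonneg (sin u), sq_nonneg (cos u)]

lemma differentiable_waveC {α β : ℝ} (hα : 0 < α) (hβ : 0 < β) :
    Differentiable ℝ (waveC α β) := fun u =>
  (by fun_prop : Differentiable ℝ fun u => α * cos u ^ 2 + β * sin u ^ 2).differentiableAt.sqrt
    (waveC_radicand_pos hα hβ u).ne'

lemma hasDerivAt_comp_mul_deriv {c φ : ℝ → ℝ} {ξ : ℝ} (hc : DifferentiableAt ℝ c (φ ξ))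
    (hφ : DifferentiableAt ℝ φ ξ) (hφ' : DifferentiableAt ℝ (deriv φ) ξ) :
    HasDerivAt (fun z => c (φ z) * deriv φ z)
      (deriv c (φ ξ) * deriv φ ξ ^ 2 + c (φ ξ) * deriv (deriv φ) ξ) ξ := by
  refine ((hc.hasDerivAt.comp ξ hφ.hasDerivAt).fun_mul hφ'.hasDerivAt).congr_deriv ?_
  simp only [Function.comp_apply]
  ring

lemma hasDerivAt_sq_deriv_mul_sub_sq {c φ : ℝ → ℝ} {ξ : ℝ} (s : ℝ)
    (hc : DifferentiableAt ℝ c (φ ξ)) (hφ : DifferentiableAt ℝ φ ξ)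
    (hφ' : DifferentiableAt ℝ (deriv φ) ξ) :
    HasDerivAt (fun z => deriv φ z ^ 2 * (s ^ 2 - c (φ z) ^ 2))
      (2 * deriv φ ξ * ((s ^ 2 - c (φ ξ) ^ 2) * deriv (deriv φ) ξ
        - c (φ ξ) * deriv c (φ ξ) * deriv φ ξ ^ 2)) ξ := by
  have hcφ := (hc.hasDerivAt.comp ξ hφ.hasDerivAt).fun_pow 2
  refine ((hφ'.hasDerivAt.fun_pow 2).fun_mul (hcφ.const_sub (s ^ 2))).congr_deriv ?_
  simp only [Function.comp_apply]
  ring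

theorem sq_deriv_mul_sub_sq_eq_of_ode {c φ : ℝ → ℝ} {s : ℝ} (hc : Differentiable ℝ c)
    (hφ : Differentiable ℝ φ) (hφ' : Differentiable ℝ (deriv φ))
    (hode : ∀ ξ, s ^ 2 * deriv (deriv φ) ξ
      = c (φ ξ) * deriv (fun z => c (φ z) * deriv φ z) ξ) (ξ₁ ξ₂ : ℝ) :
    deriv φ ξ₁ ^ 2 * (s ^ 2 - c (φ ξ₁) ^ 2) = deriv φ ξ₂ ^ 2 * (s ^ 2 - c (φ ξ₂) ^ 2) := by
  have hderiv (ξ : ℝ) : HasDerivAt (fun z => deriv φ z ^ 2 * (s ^ 2 - c (φ z) ^ 2)) 0 ξ := by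
    have hode' := hode ξ
    rw [(hasDerivAt_comp_mul_deriv (hc _) (hφ ξ) (hφ' ξ)).deriv] at hode'
    convert hasDerivAt_sq_deriv_mul_sub_sq s (hc _) (hφ ξ) (hφ' ξ) using 1
    linear_combination -2 * deriv φ ξ * hode'
  exact is_const_of_deriv_eq_zero (fun ξ => (hderiv ξ).differentiableAt)
    (fun ξ => (hderiv ξ).deriv) ξ₁ ξ₂

lemma abs_mul_sqrt_abs (a b : ℝ) : |a * √(|b|)| = √(|a ^ 2 * b|) := by
  rw [abs_mul, abs_of_nonneg (sqrt_nonneg _), ← sqrt_sq_eq_abs, ← sqrt_mul (sq_nonneg a),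
    abs_mul, abs_of_nonneg (sq_nonneg a)]

/-- if the travelling-wave profile `φ` satisfies the ODE
`s² φ″ = c(φ)(c(φ)φ′)′` then `(φ′)²(s² − c(φ)²)` is a first integral
(i.e. constant), and in particular, if `s² − c(φ)²` has a constant sign,
then `φ′ √|s² − c(φ)²|` has constant absolute value. -/
theorem travelling_wave_first_integral
    (α β s : ℝ) (hα : 0 < α) (hβ : 0 < β)
    (φ : ℝ → ℝ) (hφ : ContDiff ℝ 2 φ)
    (hode : ∀ ξ : ℝ,
      s ^ 2 * deriv (deriv φ) ξ
        = waveC α β (φ ξ) * deriv (fun z => waveC α β (φ z) * deriv φ z) ξ) :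
    (∀ ξ₁ ξ₂ : ℝ,
      (deriv φ ξ₁) ^ 2 * (s ^ 2 - waveC α β (φ ξ₁) ^ 2)
        = (deriv φ ξ₂) ^ 2 * (s ^ 2 - waveC α β (φ ξ₂) ^ 2))
    ∧ (((∀ ξ : ℝ, waveC α β (φ ξ) ^ 2 ≤ s ^ 2)
          ∨ (∀ ξ : ℝ, s ^ 2 ≤ waveC α β (φ ξ) ^ 2)) →
        ∀ ξ₁ ξ₂ : ℝ,
          |deriv φ ξ₁ * Real.sqrt (abs (s ^ 2 - waveC α β (φ ξ₁) ^ 2))|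
            = |deriv φ ξ₂ * Real.sqrt (abs (s ^ 2 - waveC α β (φ ξ₂) ^ 2))|) := by
  have hconst := sq_deriv_mul_sub_sq_eq_of_ode (differentiable_waveC hα hβ)
    (hφ.differentiable two_ne_zero) hφ.differentiable_deriv_two hode
  refine ⟨hconst, fun _ ξ₁ ξ₂ => ?_⟩
  rw [abs_mul_sqrt_abs, abs_mul_sqrt_abs, hconst ξ₁ ξ₂]
end

section
/- Let α, β > 0 and c(u) = √(α cos²u + β sin²u). Define ψ(x,t) = arccos( 1 − 2(x − √α·t) ) on the open strip U = { (x,t) ∈ ℝ² : √α·t < x < 1 + √α·t }. Then ψ is smooth on U and satisfies the nonlinear variational wave equation ∂_{tt}ψ = c(ψ)·∂_x( c(ψ)·∂_xψ ) at every point of U. -/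
open Real

private lemma hD_arccos {w : ℝ} (h0 : 0 < w) (h1 : w < 1) :
    HasDerivAt (fun u : ℝ => Real.arccos (1 - 2 * u)) ((Real.sqrt (w * (1 - w)))⁻¹) w := by
  have hy1 : (1 - 2 * w) ≠ -1 := by intro h; nlinarith [h]
  have hy2 : (1 - 2 * w) ≠ 1 := by intro h; nlinarith [h]
  have hin : HasDerivAt (fun u : ℝ => 1 - 2 * u) (-2) w := by
    simpa using ((hasDerivAt_id w).const_mul (2:ℝ)).const_sub 1
  have h := (Real.hasDerivAt_arccos hy1 hy2).comp w hin
  have hP : 0 < Real.sqrt (w * (1 - w)) := Real.sqrt_pos.mpr (by nlinarith)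
  have hs : Real.sqrt (1 - (1 - 2 * w) ^ 2) = 2 * Real.sqrt (w * (1 - w)) := by
    rw [show 1 - (1 - 2 * w) ^ 2 = 2 ^ 2 * (w * (1 - w)) by ring,
      Real.sqrt_mul (by positivity), Real.sqrt_sq (by norm_num)]
  refine h.congr_deriv ?_
  rw [hs]
  field_simp

private lemma hD_h {w : ℝ} : HasDerivAt (fun u : ℝ => u * (1 - u)) (1 - 2 * w) w := by
  have := (hasDerivAt_id w).mul ((hasDerivAt_id w).const_sub 1)
  simp only [id_eq] at this
  refine this.congr_deriv ?_
  ring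

private lemma hD_invP {w : ℝ} (h0 : 0 < w) (h1 : w < 1) :
    HasDerivAt (fun u : ℝ => (Real.sqrt (u * (1 - u)))⁻¹)
      (-(1 - 2 * w) / (2 * (w * (1 - w)) * Real.sqrt (w * (1 - w)))) w := by
  have hh : (0:ℝ) < w * (1 - w) := by nlinarith
  have hsq : 0 < Real.sqrt (w * (1 - w)) := Real.sqrt_pos.mpr hh
  have h := (hD_h.sqrt hh.ne').inv hsq.ne'
  refine h.congr_deriv ?_
  rw [Real.sq_sqrt hh.le]
  have h2 : Real.sqrt (w * (1 - w)) * Real.sqrt (w * (1 - w)) = w * (1 - w) :=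
    Real.mul_self_sqrt hh.le
  field_simp

private lemma waveC_eq {α β w : ℝ} (h0 : 0 ≤ w) (h1 : w ≤ 1) :
    waveC α β (Real.arccos (1 - 2 * w))
      = Real.sqrt (α * (1 - 2 * w) ^ 2 + β * (4 * (w * (1 - w)))) := by
  unfold waveC
  rw [Real.cos_arccos (by nlinarith) (by nlinarith), Real.sin_arccos,
    Real.sq_sqrt (by nlinarith)]
  congr 1
  ring

private lemma hD_Q {α β w : ℝ} (hα : 0 < α) (hβ : 0 < β) (h0 : 0 < w) (h1 : w < 1) :
    HasDerivAt (fun u : ℝ => Real.sqrt (α * (1 - 2 * u) ^ 2 + β * (4 * (u * (1 - u)))))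
      ((4 * β - 4 * α) * (1 - 2 * w)
        / (2 * Real.sqrt (α * (1 - 2 * w) ^ 2 + β * (4 * (w * (1 - w)))))) w := by
  have hg : (0:ℝ) < α * (1 - 2 * w) ^ 2 + β * (4 * (w * (1 - w))) := by
    nlinarith [sq_nonneg (1 - 2 * w), mul_pos hβ (mul_pos h0 (by linarith : (0:ℝ) < 1 - w))]
  have hin : HasDerivAt (fun u : ℝ => 1 - 2 * u) (-2) w := by
    simpa using ((hasDerivAt_id w).const_mul (2:ℝ)).const_sub 1
  have hpoly : HasDerivAt (fun u : ℝ => α * (1 - 2 * u) ^ 2 + β * (4 * (u * (1 - u))))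
      ((4 * β - 4 * α) * (1 - 2 * w)) w := by
    have := ((hin.pow 2).const_mul α).add ((hD_h.const_mul (4:ℝ)).const_mul β)
    refine this.congr_deriv ?_
    ring
  have := hpoly.sqrt hg.ne'
  convert this using 1

private lemma final_alg (α β a w sq sg : ℝ) (ha2 : a * a = α)
    (hsq2 : sq * sq = w * (1 - w))
    (hsg2 : sg * sg = α * (1 - 2 * w) ^ 2 + β * (4 * (w * (1 - w))))
    (hsqne : sq ≠ 0) (hsgne : sg ≠ 0) :
    -(1 - 2 * w) / (2 * (w * (1 - w)) * sq) * -a * -a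
      = sg * ((4 * β - 4 * α) * (1 - 2 * w) / (2 * sg) * sq⁻¹
          + sg * (-(1 - 2 * w) / (2 * (w * (1 - w)) * sq))) := by
  have hwne : w * (1 - w) ≠ 0 := by rw [← hsq2]; exact mul_ne_zero hsqne hsqne
  rw [← hsq2]
  field_simp
  linear_combination (2*w-1) * ha2 - (2*w-1) * hsg2 - (4*(2*w-1)*(α-β)) * hsq2

/-- the middle piece `ψ(x,t) = arccos(1 − 2(x − √α t))` of the
travelling wave is smooth on the open strip
`U = {(x,t) : √α t < x < 1 + √α t}` and satisfies the nonlinear variational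
wave equation `ψ_tt = c(ψ)(c(ψ)ψ_x)_x` at every point of `U`. -/
theorem travelling_wave_middle_piece_solves
    (α β : ℝ) (hα : 0 < α) (hβ : 0 < β)
    (ψ : ℝ → ℝ → ℝ)
    (hψdef : ∀ x t : ℝ, ψ x t = Real.arccos (1 - 2 * (x - Real.sqrt α * t))) :
    ContDiffOn ℝ (⊤ : ℕ∞) (Function.uncurry ψ)
      {q : ℝ × ℝ | Real.sqrt α * q.2 < q.1 ∧ q.1 < 1 + Real.sqrt α * q.2}
    ∧ ∀ x t : ℝ, Real.sqrt α * t < x → x < 1 + Real.sqrt α * t →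
      deriv (deriv (fun s => ψ x s)) t
        = waveC α β (ψ x t)
            * deriv (fun y => waveC α β (ψ y t) * deriv (fun z => ψ z t) y) x := by
  set a := Real.sqrt α with ha_def
  have ha2 : a * a = α := Real.mul_self_sqrt hα.le
  constructor
  · -- smoothness
    have hfun : Function.uncurry ψ = fun q : ℝ × ℝ => Real.arccos (1 - 2 * (q.1 - a * q.2)) :=
      funext fun q => hψdef q.1 q.2
    rw [hfun]
    intro q hq
    obtain ⟨hq1, hq2⟩ := hq
    have hw0 : 0 < q.1 - a * q.2 := by linarith
    have hw1 : q.1 - a * q.2 < 1 := by linarith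
    have h1 : (1 - 2 * (q.1 - a * q.2)) ≠ -1 := by intro h; nlinarith [h]
    have h2 : (1 - 2 * (q.1 - a * q.2)) ≠ 1 := by intro h; nlinarith [h]
    have hinner : ContDiff ℝ (⊤ : ℕ∞) (fun q : ℝ × ℝ => 1 - 2 * (q.1 - a * q.2)) := by fun_prop
    exact ((Real.contDiffAt_arccos h1 h2).comp q hinner.contDiffAt).contDiffWithinAt
  · -- the PDE
    intro x t hx1 hx2
    set w := x - a * t with hw_def
    have hw0 : 0 < w := by simp only [hw_def]; linarith
    have hw1 : w < 1 := by simp only [hw_def]; linarith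
    have hh : (0:ℝ) < w * (1 - w) := by nlinarith
    set sq := Real.sqrt (w * (1 - w)) with hsq_def
    have hsqpos : 0 < sq := Real.sqrt_pos.mpr hh
    have hsq2 : sq * sq = w * (1 - w) := Real.mul_self_sqrt hh.le
    set g := α * (1 - 2 * w) ^ 2 + β * (4 * (w * (1 - w))) with hg_def
    have hgpos : (0:ℝ) < g := by
      have := mul_pos hβ (mul_pos hw0 (by linarith : (0:ℝ) < 1 - w))
      nlinarith [sq_nonneg (1 - 2 * w)]
    set sg := Real.sqrt g with hsg_def
    have hsgpos : 0 < sg := Real.sqrt_pos.mpr hgpos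
    have hsg2 : sg * sg = g := Real.mul_self_sqrt hgpos.le
    -- LHS
    have hLHS : deriv (deriv (fun s => ψ x s)) t
        = (-(1 - 2 * w) / (2 * (w * (1 - w)) * sq) * (-a)) * (-a) := by
      have hSopen : IsOpen {s : ℝ | 0 < x - a * s ∧ x - a * s < 1} := by
        have : {s : ℝ | 0 < x - a * s ∧ x - a * s < 1}
            = (fun s : ℝ => x - a * s) ⁻¹' Set.Ioo 0 1 := by
          ext s; simp [Set.mem_Ioo]
        rw [this]
        exact (Continuous.sub continuous_const (continuous_const.mul continuous_id)).isOpen_preimage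
          _ isOpen_Ioo
      have htS : t ∈ {s : ℝ | 0 < x - a * s ∧ x - a * s < 1} := ⟨hw0, hw1⟩
      have hderiv1 : ∀ s : ℝ, 0 < x - a * s → x - a * s < 1 →
          HasDerivAt (fun s => ψ x s) ((Real.sqrt ((x - a * s) * (1 - (x - a * s))))⁻¹ * (-a)) s := by
        intro s hs0 hs1
        have hfun : (fun s => ψ x s) = fun s => Real.arccos (1 - 2 * (x - a * s)) := by
          funext s; exact hψdef x s
        rw [hfun]
        have hin : HasDerivAt (fun s : ℝ => x - a * s) (-a) s := by
          simpa using ((hasDerivAt_id s).const_mul a).const_sub x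
        have := (hD_arccos hs0 hs1).comp s hin
        exact this
      have hEq : deriv (fun s => ψ x s)
          =ᶠ[nhds t] fun s => (Real.sqrt ((x - a * s) * (1 - (x - a * s))))⁻¹ * (-a) := by
        filter_upwards [hSopen.mem_nhds htS] with s hs
        exact (hderiv1 s hs.1 hs.2).deriv
      rw [hEq.deriv_eq]
      have hin : HasDerivAt (fun s : ℝ => x - a * s) (-a) t := by
        simpa using ((hasDerivAt_id t).const_mul a).const_sub x
      have := ((hD_invP hw0 hw1).comp t hin).mul_const (-a)
      exact this.deriv
    -- RHS
    have hderivx : ∀ y : ℝ, 0 < y - a * t → y - a * t < 1 →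
        HasDerivAt (fun z => ψ z t) ((Real.sqrt ((y - a * t) * (1 - (y - a * t))))⁻¹) y := by
      intro y hy0 hy1
      have hfun : (fun z => ψ z t) = fun z => Real.arccos (1 - 2 * (z - a * t)) := by
        funext z; exact hψdef z t
      rw [hfun]
      have hin : HasDerivAt (fun z : ℝ => z - a * t) 1 y :=
        (hasDerivAt_id y).sub_const (a * t)
      have := (hD_arccos hy0 hy1).comp y hin
      exact this.congr_deriv (mul_one _)
    have hRHS : deriv (fun y => waveC α β (ψ y t) * deriv (fun z => ψ z t) y) x
        = (4 * β - 4 * α) * (1 - 2 * w) / (2 * sg) * sq⁻¹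
            + sg * (-(1 - 2 * w) / (2 * (w * (1 - w)) * sq)) := by
      have hSopen : IsOpen {y : ℝ | 0 < y - a * t ∧ y - a * t < 1} := by
        have : {y : ℝ | 0 < y - a * t ∧ y - a * t < 1}
            = (fun y : ℝ => y - a * t) ⁻¹' Set.Ioo 0 1 := by
          ext y; exact Iff.rfl
        rw [this]
        exact (continuous_id.sub continuous_const).isOpen_preimage _ isOpen_Ioo
      have hxS : x ∈ {y : ℝ | 0 < y - a * t ∧ y - a * t < 1} := ⟨hw0, hw1⟩
      have hEq : (fun y => waveC α β (ψ y t) * deriv (fun z => ψ z t) y)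
          =ᶠ[nhds x] fun y =>
            Real.sqrt (α * (1 - 2 * (y - a * t)) ^ 2 + β * (4 * ((y - a * t) * (1 - (y - a * t)))))
              * (Real.sqrt ((y - a * t) * (1 - (y - a * t))))⁻¹ := by
        filter_upwards [hSopen.mem_nhds hxS] with y hy
        rw [(hderivx y hy.1 hy.2).deriv, hψdef y t, waveC_eq hy.1.le hy.2.le]
      rw [hEq.deriv_eq]
      have hin : HasDerivAt (fun y : ℝ => y - a * t) 1 x := (hasDerivAt_id x).sub_const (a * t)
      have hF := ((hD_Q hα hβ hw0 hw1).mul (hD_invP hw0 hw1)).comp x hin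
      exact hF.deriv.trans (mul_one _)
    rw [hLHS, hRHS, hψdef x t, waveC_eq hw0.le hw1.le]
    have hfold : Real.sqrt (α * (1 - 2 * w) ^ 2 + β * (4 * (w * (1 - w)))) = sg := rfl
    rw [hfold]
    exact final_alg α β a w sq sg ha2 hsq2 hsg2 hsqpos.ne' hsgpos.ne'
end
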